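/- Let G be an entropy-minimal simple graph on vertices v₁,…,v_n with 3 < H(G) < 4 whose subgraph induced on {v₁,…,v₅} is the 5-cycle v₁v₂v₃v₄v₅. Then the subgraph of G induced on {v₆,…,v_n} has at most one edge. -/

import Mathlib

noncomputable section

/-- `g : [q]^V → [q]` depends essentially on coordinate `u`: there exist two inputs that
differ only at coordinate `u` on which `g` takes different values. -/
def DependsEssOn {V : Type*} {q : ℕ} (g : (V → Fin q) → Fin q) (u : V) : Prop :=
  ∃ a b : V → Fin q, (∀ w, w ≠ u → a w = b w) ∧ g a ≠ g b

/-- The interaction graph of `f` is contained in the simple graph `G`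
(viewed as the symmetric loopless digraph with arcs `(u,v)` and `(v,u)` for every edge `uv`). -/
def IGLe {V : Type*} {q : ℕ} (G : SimpleGraph V) (f : (V → Fin q) → (V → Fin q)) : Prop :=
  ∀ u v : V, DependsEssOn (fun x => f x v) u → G.Adj u v

/-- The `q`-ary guessing number of a simple graph `G`: the maximum of `log_q |Fix(f)|`
over all `f` whose interaction graph is contained in `G`. -/
def guessing {V : Type*} (G : SimpleGraph V) (q : ℕ) : ℝ :=
  sSup {x : ℝ | ∃ f : (V → Fin q) → (V → Fin q),
    IGLe G f ∧ x = Real.logb q (Set.ncard {p : V → Fin q | f p = p})}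

/-- The entropy of a simple graph: the supremum over `q ≥ 2` of its `q`-guessing numbers. -/
def graphEntropy {V : Type*} (G : SimpleGraph V) : ℝ :=
  sSup {x : ℝ | ∃ q : ℕ, 2 ≤ q ∧ x = guessing G q}

/-- The set of all entropies of finite simple graphs. -/
def entropySet : Set ℝ := {x : ℝ | ∃ (n : ℕ) (G : SimpleGraph (Fin n)), graphEntropy G = x}

/-- A finite simple graph is entropy-minimal if no simple graph with fewer vertices has the same
fractional part of the entropy. -/
def EntropyMinimal {n : ℕ} (G : SimpleGraph (Fin n)) : Prop :=
  ∀ m : ℕ, m < n → ∀ G' : SimpleGraph (Fin m),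
    Int.fract (graphEntropy G') ≠ Int.fract (graphEntropy G)

/-!
Guessing numbers are monotone under subgraphs and superadditive over vertex-disjoint unions, an
edge has guessing number `1` and a triangle has binary guessing number `2`. Hence two disjoint
outer edges, or an outer triangle, together with two disjoint edges of the 5-cycle (which can be
chosen to avoid any one vertex) would give `H(G) ≥ 4`. Two distinct outer edges that meet form a path `y - x - z`; if `y` has a neighbour
`w ≠ x` then `xz` and `yw` are disjoint edges, and otherwise `y` is a leaf. Deleting a leaf
together with its neighbour lowers every guessing number by exactly `1`, which contradicts
entropy-minimality.
-/

open Real SimpleGraph Function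

variable {V W : Type*} {q : ℕ}

theorem DependsEssOn.eq_of_eval {w u : V} (h : DependsEssOn (fun x : V → Fin q => x w) u) :
    u = w := by
  obtain ⟨a, b, hab, hne⟩ := h
  by_contra huw
  exact hne (hab w (Ne.symm huw))

theorem DependsEssOn.exists_of_comp {c : W → V} (hc : Injective c) {h : (W → Fin q) → Fin q}
    {u : V} (hd : DependsEssOn (fun x => h (x ∘ c)) u) : ∃ a, c a = u ∧ DependsEssOn h a := by
  obtain ⟨x, y, hxy, hne⟩ := hd
  by_cases hu : ∃ a, c a = u
  · obtain ⟨a, rfl⟩ := hu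
    exact ⟨a, rfl, x ∘ c, y ∘ c, fun w hw => hxy (c w) (hc.ne hw), hne⟩
  · push Not at hu
    exact absurd (congrArg h (funext fun a => hxy (c a) (hu a))) hne

theorem DependsEssOn.of_comp {E : (W → Fin q) → (V → Fin q)} {g : (V → Fin q) → Fin q} {i : W}
    {u : V} (hE : ∀ y₁ y₂, (∀ w, w ≠ i → y₁ w = y₂ w) → ∀ v, v ≠ u → E y₁ v = E y₂ v)
    (hd : DependsEssOn (fun y => g (E y)) i) : DependsEssOn g u := by
  obtain ⟨y₁, y₂, hy, hne⟩ := hd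
  exact ⟨E y₁, E y₂, hE y₁ y₂ hy, hne⟩

theorem eq_of_eqOn_of_not_dependsEssOn [Finite V] {g : (V → Fin q) → Fin q} {S : Set V}
    (hg : ∀ w ∉ S, ¬ DependsEssOn g w) {a b : V → Fin q} (hab : ∀ w ∈ S, a w = b w) :
    g a = g b := by
  classical
  have := Fintype.ofFinite V
  suffices ∀ D : Finset V, (∀ w ∈ D, w ∉ S) → ∀ a : V → Fin q, (∀ w ∉ D, a w = b w) → g a = g b
    from this (Finset.univ.filter (· ∉ S)) (by simp) a (by simpa using hab)
  intro D
  induction D using Finset.induction_on with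
  | empty => exact fun _ a ha => congrArg g (funext fun w => ha w (Finset.notMem_empty w))
  | @insert u D hu ih =>
    intro hD a ha
    have hstep : g a = g (update a u (b u)) := by
      by_contra hne
      exact hg u (hD u (Finset.mem_insert_self u D))
        ⟨a, _, fun w hw => (update_of_ne hw _ _).symm, hne⟩
    refine hstep.trans (ih (fun w hw => hD w (Finset.mem_insert_of_mem hw)) _ fun w hw => ?_)
    by_cases hwu : w = u
    · subst hwu; exact update_self ..
    · rw [update_of_ne hwu]; exact ha w (by simp [hwu, hw])

theorem igLe_const (G : SimpleGraph V) (c : V → Fin q) : IGLe G (fun _ => c) :=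
  fun _ _ ⟨_, _, _, hne⟩ => absurd rfl hne

theorem igLe_top_iff {f : (V → Fin q) → (V → Fin q)} :
    IGLe (⊤ : SimpleGraph V) f ↔ ∀ v, ¬ DependsEssOn (fun x => f x v) v :=
  ⟨fun hf v hv => (hf v v hv).ne rfl, fun hf u v huv => (top_adj u v).2 fun h => hf v (h ▸ huv)⟩

section Guessing

variable {G : SimpleGraph V}

theorem logb_natCast_le_of_le_rpow (hq : 2 ≤ q) {N : ℕ} {c : ℝ} (h : N ≤ (q : ℝ) ^ c)
    (hc : 0 ≤ c) : logb q N ≤ c := by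
  rcases Nat.eq_zero_or_pos N with h0 | hpos
  · simpa [h0] using hc
  · exact (logb_le_iff_le_rpow (by exact_mod_cast hq) (by exact_mod_cast hpos)).2 h

theorem logb_ncard_le_card [Finite V] (hq : 2 ≤ q) (s : Set (V → Fin q)) :
    logb q s.ncard ≤ Nat.card V := by
  refine logb_natCast_le_of_le_rpow hq ?_ (Nat.cast_nonneg _)
  rw [rpow_natCast]
  exact_mod_cast (s.ncard_le_card).trans (by simp [Nat.card_fun])

theorem le_guessing [Finite V] (hq : 2 ≤ q) {f : (V → Fin q) → (V → Fin q)} (hf : IGLe G f) :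
    logb q {x | f x = x}.ncard ≤ guessing G q :=
  le_csSup ⟨Nat.card V, by rintro _ ⟨f, -, rfl⟩; exact logb_ncard_le_card hq _⟩ ⟨f, hf, rfl⟩

theorem guessing_le (hq : 2 ≤ q) {c : ℝ}
    (h : ∀ f : (V → Fin q) → (V → Fin q), IGLe G f → logb q {x | f x = x}.ncard ≤ c) :
    guessing G q ≤ c :=
  csSup_le ⟨_, _, igLe_const G fun _ => ⟨0, by omega⟩, rfl⟩ (by rintro _ ⟨f, hf, rfl⟩; exact h f hf)

theorem guessing_le_card [Finite V] (hq : 2 ≤ q) : guessing G q ≤ Nat.card V :=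
  guessing_le hq fun _ _ => logb_ncard_le_card hq _

theorem guessing_nonneg [Finite V] (hq : 2 ≤ q) : 0 ≤ guessing G q := by
  let c : V → Fin q := fun _ => ⟨0, by omega⟩
  have hfix : {x | (fun _ => c) x = x} = {c} := Set.ext fun _ => eq_comm
  simpa [hfix] using le_guessing hq (igLe_const G c)

theorem ncard_le_rpow_guessing [Finite V] (hq : 2 ≤ q) {f : (V → Fin q) → (V → Fin q)}
    (hf : IGLe G f) : ({x | f x = x}.ncard : ℝ) ≤ (q : ℝ) ^ guessing G q := by
  rcases Nat.eq_zero_or_pos {x | f x = x}.ncard with h0 | hpos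
  · rw [h0, Nat.cast_zero]; positivity
  · exact (logb_le_iff_le_rpow (by exact_mod_cast hq) (by exact_mod_cast hpos)).1
      (le_guessing hq hf)

theorem guessing_le_graphEntropy [Finite V] (hq : 2 ≤ q) : guessing G q ≤ graphEntropy G :=
  le_csSup ⟨Nat.card V, by rintro _ ⟨q, hq, rfl⟩; exact guessing_le_card hq⟩ ⟨q, hq, rfl⟩

theorem graphEntropy_le {c : ℝ} (h : ∀ q, 2 ≤ q → guessing G q ≤ c) : graphEntropy G ≤ c :=
  csSup_le ⟨_, 2, le_rfl, rfl⟩ (by rintro _ ⟨q, hq, rfl⟩; exact h q hq)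

end Guessing

section Copy

variable {G : SimpleGraph V} {H : SimpleGraph W}

theorem guessing_le_of_copy [Finite V] (hq : 2 ≤ q) (c : Copy H G) :
    guessing H q ≤ guessing G q := by
  have hc : Injective c := c.injective
  refine guessing_le hq fun f' hf' => ?_
  let ext : (W → Fin q) → (V → Fin q) := fun y => extend c y fun _ => ⟨0, by omega⟩
  let f : (V → Fin q) → (V → Fin q) := fun x => ext (f' (x ∘ c))
  have hf : IGLe G f := by
    intro u v hd
    by_cases hv : ∃ b, c b = v
    · obtain ⟨b, rfl⟩ := hv
      simp only [f, ext, hc.extend_apply] at hd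
      obtain ⟨a, rfl, ha⟩ := DependsEssOn.exists_of_comp (h := fun y => f' y b) hc hd
      exact c.toHom.map_adj (hf' a b ha)
    · obtain ⟨_, _, _, hne⟩ := hd
      simp only [f, ext, extend_apply' _ _ _ hv] at hne
      exact absurd rfl hne
  have hfix : {x | f x = x} = ext '' {y | f' y = y} := by
    ext x
    constructor
    · intro hx
      have hxc : f' (x ∘ c) = x ∘ c := by
        conv_rhs => rw [← show f x = x from hx]
        exact (extend_comp hc _ _).symm
      exact ⟨x ∘ c, hxc, by rw [← hxc]; exact hx⟩
    · rintro ⟨y, hy, rfl⟩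
      change ext (f' (ext y ∘ c)) = ext y
      rw [extend_comp hc, show f' y = y from hy]
  rw [← Set.ncard_image_of_injective _ (extend_injective hc _), ← hfix]
  exact le_guessing hq hf

theorem graphEntropy_le_of_copy [Finite V] (c : Copy H G) : graphEntropy H ≤ graphEntropy G :=
  graphEntropy_le fun _ hq => (guessing_le_of_copy hq c).trans (guessing_le_graphEntropy hq)

theorem graphEntropy_congr [Finite V] [Finite W] (e : H ≃g G) : graphEntropy H = graphEntropy G :=
  (graphEntropy_le_of_copy e.toCopy).antisymm (graphEntropy_le_of_copy e.symm.toCopy)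

end Copy

namespace SimpleGraph.Copy

variable {α β : Type*} {A : SimpleGraph α} {B : SimpleGraph β} {G : SimpleGraph V}

def sum (f : Copy A G) (g : Copy B G) (h : ∀ a b, f a ≠ g b) : Copy (A ⊕g B) G where
  toHom := ⟨Sum.elim f g, by
    rintro (a | b) (a' | b') hadj
    exacts [f.toHom.map_adj hadj, absurd hadj (by simp), absurd hadj (by simp),
      g.toHom.map_adj hadj]⟩
  injective' := f.injective.sumElim g.injective h

@[simp]
theorem sum_inl (f : Copy A G) (g : Copy B G) (h) (a : α) : f.sum g h (.inl a) = f a := rfl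

@[simp]
theorem sum_inr (f : Copy A G) (g : Copy B G) (h) (b : β) : f.sum g h (.inr b) = g b := rfl

end SimpleGraph.Copy

section Sum

variable {G : SimpleGraph V} {H : SimpleGraph W}

theorem guessing_add_le_guessing_sum [Finite V] [Finite W] (hq : 2 ≤ q) :
    guessing G q + guessing H q ≤ guessing (G ⊕g H) q := by
  rw [← le_sub_iff_add_le]
  refine guessing_le hq fun f₁ hf₁ => ?_
  rw [le_sub_comm]
  refine guessing_le hq fun f₂ hf₂ => ?_
  rw [le_sub_iff_add_le']
  -- `logb q 0 = 0`: a factor without fixed points contributes nothing to the sum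
  rcases Nat.eq_zero_or_pos {x | f₁ x = x}.ncard with h₁ | h₁
  · simpa [h₁] using (le_guessing hq hf₂).trans
      (guessing_le_of_copy hq Embedding.sumInr.toCopy)
  rcases Nat.eq_zero_or_pos {x | f₂ x = x}.ncard with h₂ | h₂
  · simpa [h₂] using (le_guessing hq hf₁).trans
      (guessing_le_of_copy hq Embedding.sumInl.toCopy)
  let f : (V ⊕ W → Fin q) → (V ⊕ W → Fin q) := fun x =>
    Sum.elim (f₁ (x ∘ Sum.inl)) (f₂ (x ∘ Sum.inr))
  have hf : IGLe (G ⊕g H) f := by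
    rintro u (v | v) hd
    · obtain ⟨a, rfl, ha⟩ :=
        DependsEssOn.exists_of_comp (h := fun y => f₁ y v) Sum.inl_injective hd
      simpa using hf₁ a v ha
    · obtain ⟨a, rfl, ha⟩ :=
        DependsEssOn.exists_of_comp (h := fun y => f₂ y v) Sum.inr_injective hd
      simpa using hf₂ a v ha
  have hfix : {x | f x = x} = (Equiv.sumArrowEquivProdArrow V W (Fin q)).symm ''
      ({x | f₁ x = x} ×ˢ {x | f₂ x = x}) := by
    rw [Equiv.image_symm_eq_preimage]
    ext x
    simp [f, funext_iff, Sum.forall, Equiv.sumArrowEquivProdArrow]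
  have := le_guessing hq hf
  rwa [hfix, Set.ncard_image_of_injective _ (Equiv.injective _), Set.ncard_prod, Nat.cast_mul,
    logb_mul (by positivity) (by positivity)] at this

end Sum

local notation "K₂" => (⊤ : SimpleGraph (Fin 2))

local notation "K₃" => (⊤ : SimpleGraph (Fin 3))

theorem one_le_guessing_top_fin_two (hq : 2 ≤ q) : 1 ≤ guessing K₂ q := by
  have hf : IGLe K₂ fun x : Fin 2 → Fin q => x ∘ Fin.rev := igLe_top_iff.2 fun v hv => by
    have := hv.eq_of_eval
    fin_cases v <;> simp at this
  have hfix : {x : Fin 2 → Fin q | x ∘ Fin.rev = x} = Set.range (const (Fin 2)) := by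
    ext x
    refine ⟨fun hx => ⟨x 0, funext fun i => ?_⟩, by rintro ⟨a, rfl⟩; rfl⟩
    fin_cases i
    exacts [rfl, (congrFun hx 0).symm]
  have := le_guessing hq hf
  rwa [hfix, Set.ncard_range_of_injective (const_injective), Nat.card_eq_fintype_card,
    Fintype.card_fin, logb_self_eq_one (by exact_mod_cast hq)] at this

theorem two_le_guessing_top_fin_three : 2 ≤ guessing K₃ 2 := by
  let f : (Fin 3 → Fin 2) → (Fin 3 → Fin 2) := fun x i => x (i + 1) + x (i + 2)
  have hf : IGLe K₃ f := igLe_top_iff.2 fun v ⟨a, b, hab, hne⟩ => hne <| by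
    simp only [f]
    rw [hab (v + 1) (by fin_cases v <;> decide), hab (v + 2) (by fin_cases v <;> decide)]
  have hcard : {x | f x = x}.ncard = 4 := by
    rw [Set.ncard_eq_toFinset_card', Set.toFinset_ofPred]
    decide
  have := le_guessing le_rfl hf
  rwa [hcard, show ((4 : ℕ) : ℝ) = (2 : ℕ) ^ (2 : ℝ) by norm_num, logb_rpow (by norm_num)
    (by norm_num)] at this

theorem two_le_guessing_top_fin_two_sum (hq : 2 ≤ q) : 2 ≤ guessing (K₂ ⊕g K₂) q := by
  linarith [guessing_add_le_guessing_sum (G := K₂) (H := K₂) hq, one_le_guessing_top_fin_two hq]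

namespace SimpleGraph.Copy

variable {α : Type*} {G : SimpleGraph V}

def ofPairwiseAdj (f : α → V) (hf : Pairwise fun a b => G.Adj (f a) (f b)) :
    Copy (⊤ : SimpleGraph α) G where
  toHom := ⟨f, fun hab => hf hab⟩
  injective' a b h := by
    by_contra hab
    exact (hf hab).ne h

@[simp]
theorem coe_ofPairwiseAdj (f : α → V) (hf) : ⇑(ofPairwiseAdj (G := G) f hf) = f := rfl

def ofAdj {u v : V} (h : G.Adj u v) : Copy K₂ G :=
  ofPairwiseAdj ![u, v] fun i j hij => by fin_cases i <;> fin_cases j <;> simp_all [h.symm]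

@[simp]
theorem coe_ofAdj {u v : V} (h : G.Adj u v) : ⇑(ofAdj h) = ![u, v] := rfl

end SimpleGraph.Copy

section Pendant

variable {G : SimpleGraph V} {u v : V}

theorem guessing_induce_add_one_le [Finite V] (hq : 2 ≤ q) (huv : G.Adj u v) :
    guessing (G.induce {u, v}ᶜ) q + 1 ≤ guessing G q := by
  have c : Copy (G.induce {u, v}ᶜ ⊕g K₂) G := (Copy.induce G _).sum (Copy.ofAdj huv) <| by
    rintro ⟨w, hw⟩ i
    change w ≠ ![u, v] i
    fin_cases i <;> simp_all
  linarith [guessing_add_le_guessing_sum (G := G.induce {u, v}ᶜ) (H := K₂) hq,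
    one_le_guessing_top_fin_two hq, guessing_le_of_copy hq c]

/-- On fixed points, `x u = α` forces `x v`, and the remaining coordinates form a fixed point of a
strategy on `G - u - v`. -/
theorem ncard_fixed_slice_le [Finite V] (hq : 2 ≤ q) (hv : ∀ w, G.Adj v w → w = u)
    {f : (V → Fin q) → (V → Fin q)} (hf : IGLe G f) (α : Fin q) :
    ({x | f x = x ∧ x u = α}.ncard : ℝ) ≤ (q : ℝ) ^ guessing (G.induce {u, v}ᶜ) q := by
  classical
  set s : Set V := {u, v}ᶜ
  have hfv : ∀ x y : V → Fin q, x u = y u → f x v = f y v := fun x y hxy =>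
    eq_of_eqOn_of_not_dependsEssOn (S := {u})
      (fun w hw hd => hw (hv w (hf w v hd).symm)) (by simpa using hxy)
  let E : (s → Fin q) → (V → Fin q) := fun y w =>
    if h : w ∈ s then y ⟨w, h⟩ else if w = u then α else f (fun _ => α) v
  let f' : (s → Fin q) → (s → Fin q) := fun y i => f (E y) i
  have hf' : IGLe (G.induce s) f' := by
    refine fun i j hd => hf i j (DependsEssOn.of_comp (E := E) ?_ hd)
    intro y₁ y₂ hy w hw
    simp only [E]
    split_ifs with h
    exacts [hy _ fun e => hw (congrArg Subtype.val e), rfl, rfl]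
  have hE : ∀ x, f x = x → x u = α → E (fun i : s => x i) = x := by
    rintro x hx rfl
    funext w
    simp only [E]
    split_ifs with h hwu
    · rfl
    · rw [hwu]
    · have hwv : w = v := by simp_all [s]
      rw [hwv, ← hfv x, congrFun hx v]
      rfl
  have hslice : {x | f x = x ∧ x u = α}.ncard ≤ {y | f' y = y}.ncard := by
    refine Set.ncard_le_ncard_of_injOn (fun x i => x i) ?_ ?_
    · rintro x ⟨hx, hxu⟩
      funext i
      simp only [f', hE x hx hxu, hx]
    · rintro x₁ ⟨hx₁, hx₁u⟩ x₂ ⟨hx₂, hx₂u⟩ h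
      rw [← hE x₁ hx₁ hx₁u, ← hE x₂ hx₂ hx₂u]
      exact congrArg E h
  exact (Nat.cast_le.2 hslice).trans (ncard_le_rpow_guessing hq hf')

theorem guessing_le_induce_add_one [Finite V] (hq : 2 ≤ q) (hv : ∀ w, G.Adj v w → w = u) :
    guessing G q ≤ guessing (G.induce {u, v}ᶜ) q + 1 := by
  refine guessing_le hq fun f hf => logb_natCast_le_of_le_rpow hq ?_
    (by linarith [guessing_nonneg (G := G.induce {u, v}ᶜ) hq])
  have hunion : {x | f x = x} = ⋃ α, {x | f x = x ∧ x u = α} := by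
    ext x
    simp
  calc ({x | f x = x}.ncard : ℝ)
      ≤ ∑ α, ({x | f x = x ∧ x u = α}.ncard : ℝ) := by
        rw [hunion]
        exact_mod_cast Set.ncard_iUnion_le_of_fintype _
    _ ≤ ∑ _α : Fin q, (q : ℝ) ^ guessing (G.induce {u, v}ᶜ) q :=
        Finset.sum_le_sum fun α _ => ncard_fixed_slice_le hq hv hf α
    _ = (q : ℝ) ^ (guessing (G.induce {u, v}ᶜ) q + 1) := by
        rw [Finset.sum_const, Finset.card_univ, Fintype.card_fin, nsmul_eq_mul,
          rpow_add_one (by positivity), mul_comm]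

theorem graphEntropy_eq_induce_add_one [Finite V] (huv : G.Adj u v)
    (hv : ∀ w, G.Adj v w → w = u) :
    graphEntropy G = graphEntropy (G.induce {u, v}ᶜ) + 1 := by
  have hg : ∀ q, 2 ≤ q → guessing G q = guessing (G.induce {u, v}ᶜ) q + 1 := fun q hq =>
    (guessing_le_induce_add_one hq hv).antisymm (guessing_induce_add_one_le hq huv)
  refine (graphEntropy_le fun q hq => ?_).antisymm ?_
  · rw [hg q hq]
    linarith [guessing_le_graphEntropy (G := G.induce {u, v}ᶜ) hq]
  · rw [← le_sub_iff_add_le]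
    refine graphEntropy_le fun q hq => ?_
    linarith [hg q hq, guessing_le_graphEntropy (G := G) hq]

end Pendant

theorem EntropyMinimal.exists_adj_ne {n : ℕ} {G : SimpleGraph (Fin n)} (hmin : EntropyMinimal G)
    {u v : Fin n} (huv : G.Adj u v) : ∃ w, G.Adj v w ∧ w ≠ u := by
  by_contra! hv
  let s : Set (Fin n) := {u, v}ᶜ
  have := Fintype.ofFinite s
  have hcard : Fintype.card s < n := by
    simpa [Nat.card_eq_fintype_card] using
      Finite.card_subtype_lt (p := (· ∈ s)) (x := u) (by simp [s])
  apply hmin _ hcard ((G.induce s).overFin rfl)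
  rw [← graphEntropy_congr ((G.induce s).overFinIso rfl),
    graphEntropy_eq_induce_add_one huv hv, Int.fract_add_one]

section FiveCycle

variable {n : ℕ}

def InducesFiveCycle (G : SimpleGraph (Fin n)) : Prop :=
  ∀ i j : Fin n, i.val < 5 → j.val < 5 →
    (G.Adj i j ↔ (i.val + 1) % 5 = j.val ∨ (j.val + 1) % 5 = i.val)

variable {G : SimpleGraph (Fin n)}

theorem InducesFiveCycle.exists_two_edges_avoiding (hn : 5 ≤ n) (hC : InducesFiveCycle G)
    (w : Fin n) : ∃ c : Copy (K₂ ⊕g K₂) G, ∀ i, (c i).val < 5 ∧ c i ≠ w := by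
  -- the edges `{t+1, t+2}` and `{t+3, t+4}` of the cycle miss `t`
  obtain ⟨t, ht, htw⟩ : ∃ t, t < 5 ∧ (w.val < 5 → t = w.val) :=
    if hw : w.val < 5 then ⟨w.val, hw, fun _ => rfl⟩ else ⟨0, by omega, fun h => absurd h hw⟩
  let p : ℕ → Fin n := fun k => ⟨(t + k) % 5, by omega⟩
  have hp : ∀ k, G.Adj (p k) (p (k + 1)) := fun k => by
    refine (hC _ _ ?_ ?_).2 (.inl ?_) <;> simp only [p] <;> omega
  refine ⟨(Copy.ofAdj (hp 1)).sum (Copy.ofAdj (hp 3)) ?_, ?_⟩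
  · simp [Fin.forall_fin_two, p, Fin.ext_iff]
    omega
  · simp [Sum.forall, Fin.forall_fin_two, p, Fin.ext_iff]
    omega

theorem InducesFiveCycle.four_le_graphEntropy (hn : 5 ≤ n) (hC : InducesFiveCycle G)
    {α : Type*} [Finite α] {H : SimpleGraph α} (hH : 2 ≤ guessing H 2) (c : Copy H G) (w : Fin n)
    (hc : ∀ i, c i = w ∨ 5 ≤ (c i).val) : 4 ≤ graphEntropy G := by
  obtain ⟨c', hc'⟩ := hC.exists_two_edges_avoiding hn w
  have hdisj : ∀ i j, c i ≠ c' j := fun i j h => by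
    rcases hc i with hi | hi
    · exact (hc' j).2 (h ▸ hi)
    · exact absurd (hc' j).1 (by omega)
  linarith [guessing_add_le_guessing_sum (G := H) (H := K₂ ⊕g K₂) le_rfl,
    two_le_guessing_top_fin_two_sum le_rfl, guessing_le_of_copy le_rfl (c.sum c' hdisj),
    guessing_le_graphEntropy (G := G) le_rfl]

/-- Two outer neighbours `y ≠ z` of `x` would give an outer triangle, or an edge `yw` disjoint
from `xz`, or a leaf `y`. -/
theorem InducesFiveCycle.eq_of_adj_of_adj (hn : 5 ≤ n) (hC : InducesFiveCycle G)
    (hmin : EntropyMinimal G) (hG : graphEntropy G < 4) {x y z : Fin n} (hx : 5 ≤ x.val)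
    (hy : 5 ≤ y.val) (hz : 5 ≤ z.val) (hxy : G.Adj x y) (hxz : G.Adj x z) : y = z := by
  by_contra hyz
  by_cases hyz' : G.Adj y z
  · have hp : Pairwise fun i j => G.Adj (![x, y, z] i) (![x, y, z] j) := by
      intro i j hij
      fin_cases i <;> fin_cases j <;> simp_all [adj_comm]
    refine hG.not_ge (hC.four_le_graphEntropy hn two_le_guessing_top_fin_three
      (Copy.ofPairwiseAdj _ hp) x ?_)
    simp [Fin.forall_fin_succ, *]
  · obtain ⟨w, hyw, hwx⟩ := hmin.exists_adj_ne hxy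
    have hwz : w ≠ z := by rintro rfl; exact hyz' hyw
    have hdisj : ∀ i j, Copy.ofAdj hxz i ≠ Copy.ofAdj hyw j := by
      simp [Fin.forall_fin_two, hxy.ne, hwx.symm, Ne.symm hyz, hwz.symm]
    refine hG.not_ge (hC.four_le_graphEntropy hn (two_le_guessing_top_fin_two_sum le_rfl)
      ((Copy.ofAdj hxz).sum (Copy.ofAdj hyw) hdisj) w ?_)
    simp [Sum.forall, Fin.forall_fin_two, *]

end FiveCycle

theorem entropyMinimal_at_most_one_outer_edge_general {n : ℕ} (hn : 5 ≤ n)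
    (G : SimpleGraph (Fin n)) (hmin : EntropyMinimal G)
    (h2 : graphEntropy G < 4)
    (hcycle : ∀ i j : Fin n, i.val < 5 → j.val < 5 →
      (G.Adj i j ↔ (i.val + 1) % 5 = j.val ∨ (j.val + 1) % 5 = i.val)) :
    ∀ a b c d : Fin n, 5 ≤ a.val → 5 ≤ b.val → 5 ≤ c.val → 5 ≤ d.val →
      G.Adj a b → G.Adj c d → (a = c ∧ b = d) ∨ (a = d ∧ b = c) := by
  have hC : InducesFiveCycle G := hcycle
  intro a b c d ha hb hc hd hab hcd
  by_cases hdisj : a ≠ c ∧ a ≠ d ∧ b ≠ c ∧ b ≠ d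
  · have hdisj' : ∀ i j, Copy.ofAdj hab i ≠ Copy.ofAdj hcd j := by
      simp [Fin.forall_fin_two, hdisj]
    refine absurd (hC.four_le_graphEntropy hn (two_le_guessing_top_fin_two_sum le_rfl)
      ((Copy.ofAdj hab).sum (Copy.ofAdj hcd) hdisj') a ?_) h2.not_ge
    simp [Sum.forall, Fin.forall_fin_two, *]
  simp only [not_and_or, not_not] at hdisj
  rcases hdisj with rfl | rfl | rfl | rfl
  · exact .inl ⟨rfl, hC.eq_of_adj_of_adj hn hmin h2 ha hb hd hab hcd⟩
  · exact .inr ⟨rfl, hC.eq_of_adj_of_adj hn hmin h2 ha hb hc hab hcd.symm⟩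
  · exact .inr ⟨hC.eq_of_adj_of_adj hn hmin h2 hb ha hd hab.symm hcd, rfl⟩
  · exact .inl ⟨hC.eq_of_adj_of_adj hn hmin h2 hb ha hc hab.symm hcd.symm, rfl⟩

/-- Let `G` be an entropy-minimal simple graph on `v₁,…,v_n` (here `0,…,n-1 : Fin n`) with
`3 < H(G) < 4` whose induced subgraph on the first five vertices is the 5-cycle. Then the
subgraph induced on the remaining vertices has at most one edge. -/
theorem entropyMinimal_at_most_one_outer_edge {n : ℕ} (hn : 5 ≤ n)
    (G : SimpleGraph (Fin n)) (hmin : EntropyMinimal G)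
    (h1 : 3 < graphEntropy G) (h2 : graphEntropy G < 4)
    (hcycle : ∀ i j : Fin n, i.val < 5 → j.val < 5 →
      (G.Adj i j ↔ (i.val + 1) % 5 = j.val ∨ (j.val + 1) % 5 = i.val)) :
    ∀ a b c d : Fin n, 5 ≤ a.val → 5 ≤ b.val → 5 ≤ c.val → 5 ≤ d.val →
      G.Adj a b → G.Adj c d → (a = c ∧ b = d) ∨ (a = d ∧ b = c) :=
  entropyMinimal_at_most_one_outer_edge_general hn G hmin h2 hcycle
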